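/- If N : I^n → I is a Jensen convex n-variable mean (i.e., N((x+y)/2) ≤ (N(x)+N(y))/2 for all x,y ∈ I^n) and M : I^n → I is a cyclically symmetric mean with N ≤ M pointwise, then M(x) ≥ (x₁+⋯+xₙ)/n for all x ∈ I^n. -/

import Mathlib

/-!
Let `x ∈ Iⁿ` and let `xⱼ = x(· + j)` be its cyclic shifts, so `M xⱼ = M x ≥ N xⱼ`.
Iterating midpoint convexity, `N` of the average of the first `2ᵏ` shifts is at most `M x`.
Each coordinate of that average is a Cesàro mean of an `n`-periodic sequence, so the average
tends to the constant vector `(∑ xᵢ) / n`; since `N` of it dominates one of its coordinates,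
`(∑ xᵢ) / n ≤ M x` in the limit.
-/

open Finset Filter Function Topology
open Fin.NatCast

section DyadicMean

variable {E : Type*} [AddCommGroup E] [Module ℝ E]

noncomputable def dyadicMean (z : ℕ → E) (k : ℕ) : E :=
  ((2 : ℝ) ^ k)⁻¹ • ∑ j ∈ range (2 ^ k), z j

theorem dyadicMean_succ (z : ℕ → E) (k : ℕ) :
    dyadicMean z (k + 1) =
      (2 : ℝ)⁻¹ • (dyadicMean z k + dyadicMean (fun j => z (2 ^ k + j)) k) := by
  have h : 2 ^ (k + 1) = 2 ^ k + 2 ^ k := by ring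
  simp only [dyadicMean, h, sum_range_add, smul_add, smul_smul]
  congr 2 <;> ring

theorem dyadicMean_mem {C : Set E} (hC : Convex ℝ C) {z : ℕ → E} (hz : ∀ j, z j ∈ C)
    (k : ℕ) : dyadicMean z k ∈ C := by
  induction k generalizing z with
  | zero => simpa [dyadicMean] using hz 0
  | succ k ih =>
    rw [dyadicMean_succ, smul_add]
    exact hC (ih hz) (ih fun j => hz _) (by norm_num) (by norm_num) (by norm_num)

theorem map_dyadicMean_le {C : Set E} (hC : Convex ℝ C) {f : E → ℝ}
    (hf : ∀ x ∈ C, ∀ y ∈ C, f ((2 : ℝ)⁻¹ • (x + y)) ≤ (f x + f y) / 2)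
    {z : ℕ → E} (hz : ∀ j, z j ∈ C) {c : ℝ} (hc : ∀ j, f (z j) ≤ c) (k : ℕ) :
    f (dyadicMean z k) ≤ c := by
  induction k generalizing z with
  | zero => simpa [dyadicMean] using hc 0
  | succ k ih =>
    have h₁ := ih hz hc
    have h₂ := ih (z := fun j => z (2 ^ k + j)) (fun j => hz _) (fun j => hc _)
    rw [dyadicMean_succ]
    linarith [hf _ (dyadicMean_mem hC hz k) _ (dyadicMean_mem hC (fun j => hz (2 ^ k + j)) k)]

theorem dyadicMean_apply {ι : Type*} (z : ℕ → ι → E) (k : ℕ) (i : ι) :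
    dyadicMean z k i = dyadicMean (fun j => z j i) k := by
  simp [dyadicMean, Finset.sum_apply]

end DyadicMean

namespace Function.Periodic

theorem sum_range_add {M : Type*} [AddCommGroup M] {a : ℕ → M} {n : ℕ} (ha : Periodic a n)
    (m : ℕ) : ∑ j ∈ range n, a (m + j) = ∑ j ∈ range n, a j := by
  induction m with
  | zero => simp
  | succ m ih =>
    have h := sum_range_succ' (fun j => a (m + j)) n
    rw [sum_range_succ, ih, add_zero, ha m] at h
    simpa [add_assoc, add_comm 1] using (add_right_cancel h).symm

theorem tendsto_sum_range_div {a : ℕ → ℝ} {n : ℕ} (ha : Periodic a n) (hn : 0 < n) :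
    Tendsto (fun m : ℕ => (∑ j ∈ range m, a j) / m) atTop
      (𝓝 ((∑ j ∈ range n, a j) / n)) := by
  set μ := (∑ j ∈ range n, a j) / n
  -- the defect from the linear growth `m * μ` is periodic, hence bounded
  set e : ℕ → ℝ := fun m => ∑ j ∈ range m, a j - m * μ
  have he : Periodic e n := fun m => by
    simp only [e, μ, Finset.sum_range_add, ha.sum_range_add, Nat.cast_add]
    field_simp
    ring
  have hbdd : IsBoundedUnder (· ≤ ·) atTop (norm ∘ e) :=
    isBoundedUnder_of ⟨∑ r ∈ range n, ‖e r‖, fun m => by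
      rw [comp_apply, ← he.map_mod_nat]
      exact single_le_sum (fun r _ => norm_nonneg (e r)) (mem_range.2 (Nat.mod_lt m hn))⟩
  have h := ((tendsto_inv_atTop_nhds_zero_nat (𝕜 := ℝ)).zero_mul_isBoundedUnder_le
    hbdd).add_const μ
  rw [zero_add] at h
  refine h.congr' ?_
  filter_upwards [eventually_ne_atTop 0] with m hm
  simp only [e]
  field_simp
  ring

theorem tendsto_dyadicMean {a : ℕ → ℝ} {n : ℕ} (ha : Periodic a n) (hn : 0 < n) :
    Tendsto (dyadicMean a) atTop (𝓝 ((∑ j ∈ range n, a j) / n)) := by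
  refine ((ha.tendsto_sum_range_div hn).comp
    (tendsto_pow_atTop_atTop_of_one_lt one_lt_two)).congr fun k => ?_
  simp [dyadicMean, div_eq_inv_mul]

end Function.Periodic

section Rotation

variable {α : Type*} {n : ℕ} [NeZero n]

theorem periodic_apply_add_natCast (x : Fin n → α) (i : Fin n) :
    Periodic (fun j : ℕ => x (i + j)) n := fun j => by
  simp

theorem sum_range_apply_add_natCast [AddCommMonoid α] (x : Fin n → α) (i : Fin n) :
    ∑ j ∈ range n, x (i + j) = ∑ t, x t := by
  rw [← Fin.sum_univ_eq_sum_range (fun j => x (i + j)) n]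
  simp only [Fin.cast_val_eq_self]
  exact Equiv.sum_comp (Equiv.addLeft i) x

theorem apply_comp_add_natCast_eq {β : Type*} {s : Set α} {M : (Fin n → α) → β}
    (hM : ∀ x : Fin n → α, (∀ i, x i ∈ s) → M (x ∘ finRotate n) = M x)
    {x : Fin n → α} (hx : ∀ i, x i ∈ s) (j : ℕ) : M (fun i => x (i + j)) = M x := by
  induction j with
  | zero => simp
  | succ j ih =>
    have h : (fun i : Fin n => x (i + ↑(j + 1))) = (fun i => x (i + j)) ∘ finRotate n := by
      funext i
      rw [comp_apply, finRotate_apply, Nat.cast_succ, ← add_assoc, add_right_comm]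
    rw [h, hM _ fun i => hx _, ih]

end Rotation

theorem stmt_0 (I : Set ℝ) (hI : Convex ℝ I) (n : ℕ) (hn : 0 < n)
    (M N : (Fin n → ℝ) → ℝ)
    (hNmean : ∀ x : Fin n → ℝ, (∀ i, x i ∈ I) →
      (∃ i, x i ≤ N x) ∧ (∃ i, N x ≤ x i))
    (hMcyc : ∀ x : Fin n → ℝ, (∀ i, x i ∈ I) → M (x ∘ finRotate n) = M x)
    (hNconv : ∀ x y : Fin n → ℝ, (∀ i, x i ∈ I) → (∀ i, y i ∈ I) →
      N (fun i => (x i + y i) / 2) ≤ (N x + N y) / 2)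
    (hNM : ∀ x : Fin n → ℝ, (∀ i, x i ∈ I) → N x ≤ M x) :
    ∀ x : Fin n → ℝ, (∀ i, x i ∈ I) → (∑ i, x i) / n ≤ M x := by
  have : NeZero n := ⟨hn.ne'⟩
  intro x hx
  set C : Set (Fin n → ℝ) := {y | ∀ i, y i ∈ I}
  have hC : Convex ℝ C := fun y hy z hz a b ha hb hab i => hI (hy i) (hz i) ha hb hab
  have hNmid : ∀ y ∈ C, ∀ z ∈ C, N ((2 : ℝ)⁻¹ • (y + z)) ≤ (N y + N z) / 2 :=
    fun y hy z hz => by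
      convert hNconv y z hy hz using 2
      ext i
      simp [div_eq_inv_mul]
  set rot : ℕ → Fin n → ℝ := fun j i => x (i + j)
  have hrot : ∀ j, rot j ∈ C := fun j i => hx _
  have hbound : ∀ k, N (dyadicMean rot k) ≤ M x := map_dyadicMean_le hC hNmid hrot
    fun j => (hNM _ (hrot j)).trans (apply_comp_add_natCast_eq hMcyc hx j).le
  have hlim : ∀ i, Tendsto (fun k => dyadicMean rot k i) atTop (𝓝 ((∑ t, x t) / n)) := by
    intro i
    simp_rw [dyadicMean_apply, ← sum_range_apply_add_natCast x i]
    exact (periodic_apply_add_natCast x i).tendsto_dyadicMean hn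
  by_contra! hlt
  obtain ⟨k, hk⟩ := (eventually_all.2 fun i => (hlim i).eventually (lt_mem_nhds hlt)).exists
  obtain ⟨i, hi⟩ := (hNmean _ (dyadicMean_mem hC hrot k)).1
  exact (hk i).not_ge (hi.trans (hbound k))
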